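/- arXiv:math/0510193 — 5 statements merged into one kernel-verified Lean document; each statement's English description precedes it below -/
import Mathlib

section
/- If α ≻ (1,1) (i.e., α₁ > 1 and α₂ > 1) and β ⪯ α, then the space of multipliers from D_α to D_β is exactly D_β: M(D_α, D_β) = D_β. -/
open scoped BigOperators

/-- The open unit disc in ℂ. -/
def UnitDisc : Set ℂ := {z : ℂ | ‖z‖ < 1}

/-- The open unit bidisc in ℂ². -/
def UnitBidisc : Set (ℂ × ℂ) := {p : ℂ × ℂ | ‖p.1‖ < 1 ∧ ‖p.2‖ < 1}

/-- `a` is the double power series coefficient sequence of `f` on the bidisc. -/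
def IsCoeff (f : ℂ × ℂ → ℂ) (a : ℕ → ℕ → ℂ) : Prop :=
  ∀ p ∈ UnitBidisc,
    HasSum (fun kl : ℕ × ℕ => a kl.1 kl.2 * p.1 ^ kl.1 * p.2 ^ kl.2) (f p)

/-- Weighted squared-coefficient summand for the bidisc Dirichlet type space. -/
noncomputable def wt (a1 a2 : ℝ) (a : ℕ → ℕ → ℂ) (kl : ℕ × ℕ) : ℝ :=
  ‖a kl.1 kl.2‖ ^ 2 * ((kl.1 : ℝ) + 1) ^ a1 * ((kl.2 : ℝ) + 1) ^ a2

/-- Membership in the Dirichlet type space `D_{(a1,a2)}` on the bidisc. -/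
def MemD (a1 a2 : ℝ) (f : ℂ × ℂ → ℂ) : Prop :=
  ∃ a : ℕ → ℕ → ℂ, IsCoeff f a ∧ Summable (wt a1 a2 a)

/-- `b` is the power series coefficient sequence of `g` on the unit disc. -/
def IsCoeff1 (g : ℂ → ℂ) (b : ℕ → ℂ) : Prop :=
  ∀ z ∈ UnitDisc, HasSum (fun k : ℕ => b k * z ^ k) (g z)

/-- Weighted squared-coefficient summand for the one-variable Dirichlet type space. -/
noncomputable def wt1 (a : ℝ) (b : ℕ → ℂ) (k : ℕ) : ℝ :=
  ‖b k‖ ^ 2 * ((k : ℝ) + 1) ^ a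

/-- Membership in the one-variable Dirichlet type space `D_a` on the unit disc. -/
def MemD1 (a : ℝ) (g : ℂ → ℂ) : Prop :=
  ∃ b : ℕ → ℂ, IsCoeff1 g b ∧ Summable (wt1 a b)

/-- `φ` is a multiplier from `D_{(a1,a2)}` to `D_{(b1,b2)}` on the bidisc. -/
def MemM (a1 a2 b1 b2 : ℝ) (φ : ℂ × ℂ → ℂ) : Prop :=
  ∀ f : ℂ × ℂ → ℂ, MemD a1 a2 f → MemD b1 b2 (fun p => φ p * f p)

/-- `φ` is a multiplier from `D_a` to `D_b` on the unit disc. -/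
def MemM1 (a b : ℝ) (φ : ℂ → ℂ) : Prop :=
  ∀ g : ℂ → ℂ, MemD1 a g → MemD1 b (fun z => φ z * g z)

/-- The norm of the evaluation functional at `(z,w)` on `D_{(g1,g2)}`. -/
noncomputable def evalNorm (g1 g2 : ℝ) (z w : ℂ) : ℝ :=
  Real.sqrt (∑' kl : ℕ × ℕ,
    ‖z‖ ^ (2 * kl.1) * ‖w‖ ^ (2 * kl.2) *
      ((kl.1 : ℝ) + 1) ^ (-g1) * ((kl.2 : ℝ) + 1) ^ (-g2))

/-!
Since `1 ∈ D_α`, every multiplier lies in `D_β`. Conversely, the coefficients of `φ f` are the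
Cauchy product of those of `φ` and `f`, and Cauchy–Schwarz on each antidiagonal (a Schur test)
gives `‖φ f‖_β ≤ C ‖φ‖_β ‖f‖_α` as soon as the kernel
`(n + 1)^β ∑_{i + j = n} (i + 1)^(-β) (j + 1)^(-α)` is bounded. The weights factor over the two
variables, so it suffices to bound the one-variable kernel. For `i + j = k` the weight
`(k + 1)^b` is at most `2^|b|` times the weight of the larger index, and `b ≤ a` lets the smaller
index absorb the rest; this leaves `2^|b| ((i + 1)^(-a) + (j + 1)^(-a))`, whose sum over the
antidiagonal is bounded because `a > 1`.
-/

open Finset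

namespace Finset

instance HasAntidiagonal.prod {A B : Type*} [AddMonoid A] [AddMonoid B] [HasAntidiagonal A]
    [HasAntidiagonal B] : HasAntidiagonal (A × B) where
  antidiagonal n :=
    (antidiagonal n.1 ×ˢ antidiagonal n.2).map (Equiv.prodProdProdComm A A B B).toEmbedding
  mem_antidiagonal {n p} := by
    rw [mem_map_equiv, mem_product, mem_antidiagonal, mem_antidiagonal, Prod.ext_iff]
    rfl

theorem sum_antidiagonal_prod {A B M : Type*} [AddMonoid A] [AddMonoid B] [HasAntidiagonal A]
    [HasAntidiagonal B] [AddCommMonoid M] (n : A × B) (f : (A × B) × (A × B) → M) :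
    ∑ p ∈ antidiagonal n, f p =
      ∑ p ∈ antidiagonal n.1, ∑ q ∈ antidiagonal n.2, f ((p.1, q.1), (p.2, q.2)) := by
  rw [← sum_product']
  exact sum_map _ _ _

end Finset

section WeightedCauchyProduct

variable {A R : Type*} [AddCommMonoid A] [HasAntidiagonal A] [SeminormedRing R]

theorem sq_norm_sum_antidiagonal_mul_le {u v : A → ℝ} (hu : ∀ i, 0 < u i) (hv : ∀ i, 0 < v i)
    (f g : A → R) (n : A) :
    ‖∑ p ∈ antidiagonal n, f p.1 * g p.2‖ ^ 2 ≤
      (∑ p ∈ antidiagonal n, ‖f p.1‖ ^ 2 * u p.1 * (‖g p.2‖ ^ 2 * v p.2)) *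
        ∑ p ∈ antidiagonal n, (u p.1 * v p.2)⁻¹ := by
  have hnorm : ‖∑ p ∈ antidiagonal n, f p.1 * g p.2‖ ≤ ∑ p ∈ antidiagonal n, ‖f p.1‖ * ‖g p.2‖ :=
    (norm_sum_le _ _).trans (sum_le_sum fun p _ => norm_mul_le _ _)
  refine (pow_le_pow_left₀ (norm_nonneg _) hnorm 2).trans ?_
  refine sum_sq_le_sum_mul_sum_of_sq_le_mul _ (fun p _ => ?_) (fun p _ => ?_) (fun p _ => ?_)
  · have := hu p.1; have := hv p.2; positivity
  · have := hu p.1; have := hv p.2; positivity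
  · have := (hu p.1).ne'; have := (hv p.2).ne'
    refine le_of_eq ?_
    field_simp

theorem summable_sq_norm_sum_antidiagonal_mul {u v w : A → ℝ} (hu : ∀ i, 0 < u i)
    (hv : ∀ i, 0 < v i) (hw : ∀ n, 0 ≤ w n) {K : ℝ}
    (hK : ∀ n, w n * ∑ p ∈ antidiagonal n, (u p.1 * v p.2)⁻¹ ≤ K) {f g : A → R}
    (hf : Summable fun i => ‖f i‖ ^ 2 * u i) (hg : Summable fun i => ‖g i‖ ^ 2 * v i) :
    Summable fun n => ‖∑ p ∈ antidiagonal n, f p.1 * g p.2‖ ^ 2 * w n := by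
  have hfu : ∀ i, 0 ≤ ‖f i‖ ^ 2 * u i := fun i => by have := hu i; positivity
  have hgv : ∀ i, 0 ≤ ‖g i‖ ^ 2 * v i := fun i => by have := hv i; positivity
  have hfg := summable_sum_mul_antidiagonal_of_summable_mul
    (Summable.mul_of_nonneg hf hg (fun i => hfu i) fun i => hgv i)
  refine (hfg.mul_left K).of_nonneg_of_le (fun n => mul_nonneg (sq_nonneg _) (hw n)) fun n => ?_
  calc ‖∑ p ∈ antidiagonal n, f p.1 * g p.2‖ ^ 2 * w n
      ≤ (∑ p ∈ antidiagonal n, ‖f p.1‖ ^ 2 * u p.1 * (‖g p.2‖ ^ 2 * v p.2)) *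
          (∑ p ∈ antidiagonal n, (u p.1 * v p.2)⁻¹) * w n :=
        mul_le_mul_of_nonneg_right (sq_norm_sum_antidiagonal_mul_le hu hv f g n) (hw n)
    _ = (w n * ∑ p ∈ antidiagonal n, (u p.1 * v p.2)⁻¹) *
          ∑ p ∈ antidiagonal n, ‖f p.1‖ ^ 2 * u p.1 * (‖g p.2‖ ^ 2 * v p.2) := by ring
    _ ≤ K * ∑ p ∈ antidiagonal n, ‖f p.1‖ ^ 2 * u p.1 * (‖g p.2‖ ^ 2 * v p.2) :=
        mul_le_mul_of_nonneg_right (hK n) (sum_nonneg fun p _ => mul_nonneg (hfu _) (hgv _))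

theorem mul_sum_antidiagonal_prod_inv_le {B : Type*} [AddCommMonoid B] [HasAntidiagonal B]
    {u₁ v₁ w₁ : A → ℝ} {u₂ v₂ w₂ : B → ℝ} (hu₁ : ∀ i, 0 ≤ u₁ i) (hv₁ : ∀ i, 0 ≤ v₁ i)
    (hw₁ : ∀ n, 0 ≤ w₁ n) (hu₂ : ∀ i, 0 ≤ u₂ i) (hv₂ : ∀ i, 0 ≤ v₂ i) (hw₂ : ∀ n, 0 ≤ w₂ n)
    {K₁ K₂ : ℝ} (hK₁ : ∀ n, w₁ n * ∑ p ∈ antidiagonal n, (u₁ p.1 * v₁ p.2)⁻¹ ≤ K₁)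
    (hK₂ : ∀ n, w₂ n * ∑ p ∈ antidiagonal n, (u₂ p.1 * v₂ p.2)⁻¹ ≤ K₂) (n : A × B) :
    w₁ n.1 * w₂ n.2 *
        ∑ p ∈ antidiagonal n, (u₁ p.1.1 * u₂ p.1.2 * (v₁ p.2.1 * v₂ p.2.2))⁻¹ ≤ K₁ * K₂ := by
  have hsum : ∑ p ∈ antidiagonal n, (u₁ p.1.1 * u₂ p.1.2 * (v₁ p.2.1 * v₂ p.2.2))⁻¹ =
      (∑ p ∈ antidiagonal n.1, (u₁ p.1 * v₁ p.2)⁻¹) *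
        ∑ q ∈ antidiagonal n.2, (u₂ q.1 * v₂ q.2)⁻¹ := by
    rw [sum_antidiagonal_prod, sum_mul_sum]
    refine sum_congr rfl fun p _ => sum_congr rfl fun q _ => ?_
    rw [← mul_inv]
    ring_nf
  have hS₂ : 0 ≤ w₂ n.2 * ∑ q ∈ antidiagonal n.2, (u₂ q.1 * v₂ q.2)⁻¹ :=
    mul_nonneg (hw₂ _) (sum_nonneg fun q _ => inv_nonneg.2 (mul_nonneg (hu₂ _) (hv₂ _)))
  have hK₁' : 0 ≤ K₁ := le_trans (mul_nonneg (hw₁ n.1)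
    (sum_nonneg fun p _ => inv_nonneg.2 (mul_nonneg (hu₁ _) (hv₁ _)))) (hK₁ n.1)
  calc w₁ n.1 * w₂ n.2 *
        ∑ p ∈ antidiagonal n, (u₁ p.1.1 * u₂ p.1.2 * (v₁ p.2.1 * v₂ p.2.2))⁻¹
      = (w₁ n.1 * ∑ p ∈ antidiagonal n.1, (u₁ p.1 * v₁ p.2)⁻¹) *
          (w₂ n.2 * ∑ q ∈ antidiagonal n.2, (u₂ q.1 * v₂ q.2)⁻¹) := by rw [hsum]; ring
    _ ≤ K₁ * K₂ := mul_le_mul (hK₁ n.1) (hK₂ n.2) hS₂ hK₁'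

end WeightedCauchyProduct

theorem Real.rpow_le_two_rpow_abs_mul_rpow {x z : ℝ} (hx : 0 < x) (hxz : x ≤ z) (hz : z ≤ 2 * x)
    (b : ℝ) : z ^ b ≤ 2 ^ |b| * x ^ b := by
  have h1 : 1 ≤ z / x := (one_le_div hx).2 hxz
  have h2 : z / x ≤ 2 := (div_le_iff₀ hx).2 hz
  have hratio : (z / x) ^ b ≤ 2 ^ |b| :=
    (Real.rpow_le_rpow_of_exponent_le h1 (le_abs_self b)).trans
      (Real.rpow_le_rpow (by linarith) h2 (abs_nonneg b))
  rw [Real.div_rpow (by linarith) hx.le, div_le_iff₀ (Real.rpow_pos_of_pos hx b)] at hratio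
  exact hratio

theorem Real.rpow_mul_inv_rpow_mul_rpow_le {x y z a b : ℝ} (hx : 0 < x) (hy : 0 < y)
    (hz₁ : max x y ≤ z) (hz₂ : z ≤ 2 * max x y) (hba : b ≤ a) :
    z ^ b * (x ^ b * y ^ a)⁻¹ ≤ 2 ^ |b| * (x ^ (-a) + y ^ (-a)) := by
  have hxa := Real.rpow_pos_of_pos hx (-a)
  have hya := Real.rpow_pos_of_pos hy (-a)
  rw [mul_inv, ← Real.rpow_neg hx.le, ← Real.rpow_neg hy.le]
  rcases le_total y x with hyx | hxy
  · rw [max_eq_left hyx] at hz₁ hz₂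
    calc z ^ b * (x ^ (-b) * y ^ (-a)) ≤ 2 ^ |b| * x ^ b * (x ^ (-b) * y ^ (-a)) :=
          mul_le_mul_of_nonneg_right (Real.rpow_le_two_rpow_abs_mul_rpow hx hz₁ hz₂ b)
            (by positivity)
      _ = 2 ^ |b| * y ^ (-a) := by
          rw [mul_assoc, ← mul_assoc (x ^ b), ← Real.rpow_add hx, add_neg_cancel,
            Real.rpow_zero, one_mul]
      _ ≤ 2 ^ |b| * (x ^ (-a) + y ^ (-a)) := by gcongr; linarith
  · rw [max_eq_right hxy] at hz₁ hz₂
    have hyb : y ^ (b - a) ≤ x ^ (b - a) := Real.rpow_le_rpow_of_nonpos hx hxy (by linarith)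
    calc z ^ b * (x ^ (-b) * y ^ (-a)) ≤ 2 ^ |b| * y ^ b * (x ^ (-b) * y ^ (-a)) :=
          mul_le_mul_of_nonneg_right (Real.rpow_le_two_rpow_abs_mul_rpow hy hz₁ hz₂ b)
            (by positivity)
      _ = 2 ^ |b| * (y ^ (b - a) * x ^ (-b)) := by
          rw [sub_eq_add_neg, Real.rpow_add hy]; ring
      _ ≤ 2 ^ |b| * (x ^ (b - a) * x ^ (-b)) := by gcongr
      _ = 2 ^ |b| * x ^ (-a) := by rw [← Real.rpow_add hx]; ring_nf
      _ ≤ 2 ^ |b| * (x ^ (-a) + y ^ (-a)) := by gcongr; linarith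

noncomputable def powWeight (r : ℝ) (n : ℕ) : ℝ := ((n : ℝ) + 1) ^ r

theorem powWeight_pos (r : ℝ) (n : ℕ) : 0 < powWeight r n := by
  unfold powWeight; positivity

theorem summable_powWeight_neg {a : ℝ} (ha : 1 < a) : Summable (powWeight (-a)) := by
  have := (summable_nat_add_iff 1).2 (Real.summable_nat_rpow.2 (by linarith : -a < -1))
  unfold powWeight
  exact_mod_cast this

theorem summable_powWeight_mul_pow (r : ℝ) {ρ : ℝ} (hρ₀ : 0 ≤ ρ) (hρ₁ : ρ < 1) :
    Summable fun n => powWeight r n * ρ ^ n := by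
  obtain ⟨N, hN⟩ := exists_nat_ge r
  have hρ : ‖ρ‖ < 1 := by rwa [Real.norm_of_nonneg hρ₀]
  refine (summable_descFactorial_mul_geometric_of_norm_lt_one N hρ).of_nonneg_of_le
    (fun n => mul_nonneg (powWeight_pos r n).le (pow_nonneg hρ₀ n)) fun n => ?_
  refine mul_le_mul_of_nonneg_right ?_ (pow_nonneg hρ₀ n)
  have hdesc : (n + 1) ^ N ≤ (n + N).descFactorial N := by
    have := Nat.pow_sub_le_descFactorial (n + N) N
    rwa [Nat.add_right_comm, Nat.add_sub_cancel] at this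
  calc powWeight r n ≤ ((n : ℝ) + 1) ^ (N : ℝ) :=
        Real.rpow_le_rpow_of_exponent_le (by linarith [n.cast_nonneg (α := ℝ)]) hN
    _ ≤ (n + N).descFactorial N := by rw [Real.rpow_natCast]; exact_mod_cast hdesc

theorem powWeight_mul_sum_antidiagonal_inv_le {a b : ℝ} (ha : 1 < a) (hb : b ≤ a) (k : ℕ) :
    powWeight b k * ∑ p ∈ antidiagonal k, (powWeight b p.1 * powWeight a p.2)⁻¹ ≤
      2 ^ |b| * (2 * ∑' n, powWeight (-a) n) := by
  have hpoint : ∀ p ∈ antidiagonal k, powWeight b k * (powWeight b p.1 * powWeight a p.2)⁻¹ ≤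
      2 ^ |b| * (powWeight (-a) p.1 + powWeight (-a) p.2) := by
    intro p hp
    rw [HasAntidiagonal.mem_antidiagonal] at hp
    subst hp
    have h1 : (0 : ℝ) ≤ p.1 := p.1.cast_nonneg
    have h2 : (0 : ℝ) ≤ p.2 := p.2.cast_nonneg
    refine Real.rpow_mul_inv_rpow_mul_rpow_le (by positivity) (by positivity) ?_ ?_ hb <;>
      push_cast <;> cases max_cases ((p.1 : ℝ) + 1) ((p.2 : ℝ) + 1) <;> linarith
  have hpartial : ∑ i ∈ range (k + 1), powWeight (-a) i ≤ ∑' n, powWeight (-a) n :=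
    (summable_powWeight_neg ha).sum_le_tsum _ fun n _ => (powWeight_pos _ n).le
  have hsnd : ∑ p ∈ antidiagonal k, powWeight (-a) p.2 =
      ∑ p ∈ antidiagonal k, powWeight (-a) p.1 :=
    (Nat.sum_antidiagonal_swap (f := fun p => powWeight (-a) p.2)).symm
  calc powWeight b k * ∑ p ∈ antidiagonal k, (powWeight b p.1 * powWeight a p.2)⁻¹
      ≤ ∑ p ∈ antidiagonal k, 2 ^ |b| * (powWeight (-a) p.1 + powWeight (-a) p.2) := by
        rw [mul_sum]; exact sum_le_sum hpoint
    _ = 2 ^ |b| * (2 * ∑ i ∈ range (k + 1), powWeight (-a) i) := by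
        rw [← mul_sum, sum_add_distrib, hsnd,
          Nat.sum_antidiagonal_eq_sum_range_succ (fun i _ => powWeight (-a) i)]
        ring
    _ ≤ 2 ^ |b| * (2 * ∑' n, powWeight (-a) n) := by gcongr

theorem HasSum.mul_antidiagonal_of_summable_norm {A R : Type*} [AddCommMonoid A]
    [HasAntidiagonal A] [NormedRing R] [CompleteSpace R] {f g : A → R} {s t : R}
    (hf : HasSum f s) (hg : HasSum g t) (hf' : Summable fun i => ‖f i‖)
    (hg' : Summable fun i => ‖g i‖) :
    HasSum (fun n => ∑ p ∈ antidiagonal n, f p.1 * g p.2) (s * t) := by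
  have hfg := summable_mul_of_summable_norm hf' hg'
  rw [← hf.tsum_eq, ← hg.tsum_eq,
    hf.summable.tsum_mul_tsum_eq_tsum_sum_antidiagonal hg.summable hfg]
  exact (summable_sum_mul_antidiagonal_of_summable_mul hfg).hasSum

theorem summable_mul_of_summable_sq_mul {ι : Type*} {x y w : ι → ℝ} (hx : ∀ i, 0 ≤ x i)
    (hy : ∀ i, 0 ≤ y i) (hw : ∀ i, 0 < w i) (hxw : Summable fun i => x i ^ 2 * w i)
    (hyw : Summable fun i => y i ^ 2 / w i) : Summable fun i => x i * y i := by
  refine (hxw.add hyw).of_nonneg_of_le (fun i => mul_nonneg (hx i) (hy i)) fun i => ?_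
  have hwi := hw i
  have hsq : x i ^ 2 * w i + y i ^ 2 / w i - 2 * (x i * y i) = (x i * w i - y i) ^ 2 / w i := by
    field_simp
    ring
  have : 0 ≤ (x i * w i - y i) ^ 2 / w i := by positivity
  nlinarith [mul_nonneg (hx i) (hy i)]

def coeffMul (b a : ℕ → ℕ → ℂ) (k l : ℕ) : ℂ :=
  ∑ p ∈ antidiagonal (k, l), b p.1.1 p.1.2 * a p.2.1 p.2.2

theorem wt_eq (r₁ r₂ : ℝ) (a : ℕ → ℕ → ℂ) (kl : ℕ × ℕ) :
    wt r₁ r₂ a kl = ‖a kl.1 kl.2‖ ^ 2 * (powWeight r₁ kl.1 * powWeight r₂ kl.2) :=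
  mul_assoc _ _ _

theorem summable_norm_of_summable_wt {r₁ r₂ : ℝ} {a : ℕ → ℕ → ℂ} (ha : Summable (wt r₁ r₂ a))
    {z w : ℂ} (hz : ‖z‖ < 1) (hw : ‖w‖ < 1) :
    Summable fun kl : ℕ × ℕ => ‖a kl.1 kl.2 * z ^ kl.1 * w ^ kl.2‖ := by
  have hgeom : Summable fun kl : ℕ × ℕ =>
      powWeight (-r₁) kl.1 * (‖z‖ ^ 2) ^ kl.1 * (powWeight (-r₂) kl.2 * (‖w‖ ^ 2) ^ kl.2) :=
    Summable.mul_of_nonneg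
      (summable_powWeight_mul_pow _ (by positivity) (by nlinarith [norm_nonneg z]))
      (summable_powWeight_mul_pow _ (by positivity) (by nlinarith [norm_nonneg w]))
      (fun k => by have := powWeight_pos (-r₁) k; positivity)
      (fun l => by have := powWeight_pos (-r₂) l; positivity)
  have := summable_mul_of_summable_sq_mul (x := fun kl : ℕ × ℕ => ‖a kl.1 kl.2‖)
    (y := fun kl => ‖z‖ ^ kl.1 * ‖w‖ ^ kl.2) (fun _ => norm_nonneg _) (fun _ => by positivity)
    (fun kl => mul_pos (powWeight_pos r₁ kl.1) (powWeight_pos r₂ kl.2))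
    (ha.congr (wt_eq r₁ r₂ a)) (hgeom.congr fun kl => ?_)
  · simpa only [norm_mul, norm_pow, mul_assoc] using this
  · simp only [powWeight]
    rw [Real.rpow_neg (by positivity), Real.rpow_neg (by positivity)]
    field_simp
    ring

theorem IsCoeff.mul {φ f : ℂ × ℂ → ℂ} {b a : ℕ → ℕ → ℂ} {r₁ r₂ s₁ s₂ : ℝ} (hφ : IsCoeff φ b)
    (hf : IsCoeff f a) (hb : Summable (wt r₁ r₂ b)) (ha : Summable (wt s₁ s₂ a)) :
    IsCoeff (fun p => φ p * f p) (coeffMul b a) := by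
  rintro ⟨z, w⟩ ⟨hz, hw⟩
  have hprod := (hφ _ ⟨hz, hw⟩).mul_antidiagonal_of_summable_norm (hf _ ⟨hz, hw⟩)
    (summable_norm_of_summable_wt hb hz hw) (summable_norm_of_summable_wt ha hz hw)
  refine hprod.congr_fun fun n => ?_
  rw [coeffMul, sum_mul, sum_mul]
  refine sum_congr rfl fun p hp => ?_
  rw [HasAntidiagonal.mem_antidiagonal] at hp
  subst hp
  simp only [Prod.fst_add, Prod.snd_add, pow_add]
  ring

theorem summable_wt_coeffMul {a₁ a₂ b₁ b₂ : ℝ} (h₁ : 1 < a₁) (h₂ : 1 < a₂) (hb₁ : b₁ ≤ a₁)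
    (hb₂ : b₂ ≤ a₂) {b a : ℕ → ℕ → ℂ} (hb : Summable (wt b₁ b₂ b))
    (ha : Summable (wt a₁ a₂ a)) : Summable (wt b₁ b₂ (coeffMul b a)) := by
  have hpos := powWeight_pos
  have hK := mul_sum_antidiagonal_prod_inv_le (fun i => (hpos b₁ i).le) (fun i => (hpos a₁ i).le)
    (fun i => (hpos b₁ i).le) (fun i => (hpos b₂ i).le) (fun i => (hpos a₂ i).le)
    (fun i => (hpos b₂ i).le) (powWeight_mul_sum_antidiagonal_inv_le h₁ hb₁)
    (powWeight_mul_sum_antidiagonal_inv_le h₂ hb₂)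
  have := summable_sq_norm_sum_antidiagonal_mul (A := ℕ × ℕ) (R := ℂ) (f := Function.uncurry b)
    (g := Function.uncurry a) (u := fun i => powWeight b₁ i.1 * powWeight b₂ i.2)
    (v := fun i => powWeight a₁ i.1 * powWeight a₂ i.2)
    (w := fun i => powWeight b₁ i.1 * powWeight b₂ i.2)
    (fun i => mul_pos (hpos b₁ i.1) (hpos b₂ i.2)) (fun i => mul_pos (hpos a₁ i.1) (hpos a₂ i.2))
    (fun i => (mul_pos (hpos b₁ i.1) (hpos b₂ i.2)).le) hK (hb.congr (wt_eq b₁ b₂ b))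
    (ha.congr (wt_eq a₁ a₂ a))
  exact this.congr fun kl => (wt_eq b₁ b₂ (coeffMul b a) kl).symm

theorem MemD.mul {a₁ a₂ b₁ b₂ : ℝ} (h₁ : 1 < a₁) (h₂ : 1 < a₂) (hb₁ : b₁ ≤ a₁) (hb₂ : b₂ ≤ a₂)
    {φ f : ℂ × ℂ → ℂ} (hφ : MemD b₁ b₂ φ) (hf : MemD a₁ a₂ f) :
    MemD b₁ b₂ fun p => φ p * f p := by
  obtain ⟨b, hφb, hb⟩ := hφ
  obtain ⟨a, hfa, ha⟩ := hf
  exact ⟨coeffMul b a, hφb.mul hfa hb ha, summable_wt_coeffMul h₁ h₂ hb₁ hb₂ hb ha⟩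

theorem memD_one (r₁ r₂ : ℝ) : MemD r₁ r₂ fun _ => 1 := by
  classical
  let c : ℕ → ℕ → ℂ := fun k l => if (k, l) = 0 then 1 else 0
  have hc : ∀ kl : ℕ × ℕ, kl ≠ 0 → c kl.1 kl.2 = 0 := fun kl hkl => if_neg hkl
  refine ⟨c, fun p _ => ?_, ?_⟩
  · convert hasSum_single (f := fun kl : ℕ × ℕ => c kl.1 kl.2 * p.1 ^ kl.1 * p.2 ^ kl.2) 0
      fun kl hkl => by simp only [hc kl hkl, zero_mul]
    simp [c]
  · exact (hasSum_single (f := wt r₁ r₂ c) 0 fun kl hkl => by simp [wt, hc kl hkl]).summable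

/-- if `α ≻ (1,1)` and `β ⪯ α`, then `M(D_α, D_β) = D_β`. -/
theorem stmt12 (a1 a2 b1 b2 : ℝ) (h1 : 1 < a1) (h2 : 1 < a2)
    (hb1 : b1 ≤ a1) (hb2 : b2 ≤ a2) (φ : ℂ × ℂ → ℂ) :
    MemM a1 a2 b1 b2 φ ↔ MemD b1 b2 φ := by
  refine ⟨fun hφ => ?_, fun hφ f hf => hφ.mul h1 h2 hb1 hb2 hf⟩
  simpa only [mul_one] using hφ _ (memD_one a1 a2)
end

section
/- For α₁ > 1 and β₁ ≤ α₁, there is a constant C depending only on α₁ such that for all nonnegative integers k: (k+1)^{β₁} · Σ_{m=0}^{k} 1/((m+1)^{α₁} (k-m+1)^{β₁}) ≤ C. -/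
open scoped BigOperators

/-!
Write `A = m + 1`, `B = k - m + 1`, so that `k + 1 = A + B - 1` lies between `B` and `A + B`.
Since `(k + 1) / B ≥ 1` and `β₁ ≤ α₁`, the exponent `β₁` may be raised to `α₁`, and the summand
times `(k + 1)^β₁` is at most `((A + B) / (A B))^α₁ = (1/A + 1/B)^α₁ ≤ 2^(α₁-1) (A^-α₁ + B^-α₁)`.
Summing over `m`, both halves are partial sums of the convergent series `∑ (n + 1)^-α₁`.
-/

open Finset

lemma Real.rpow_add_le_mul_rpow_add_rpow {x y p : ℝ} (hx : 0 ≤ x) (hy : 0 ≤ y) (hp : 1 ≤ p) :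
    (x + y) ^ p ≤ 2 ^ (p - 1) * (x ^ p + y ^ p) := by
  lift x to NNReal using hx
  lift y to NNReal using hy
  exact_mod_cast NNReal.rpow_add_le_mul_rpow_add_rpow x y hp

lemma rpow_mul_one_div_rpow_mul_rpow_le {a b A B K : ℝ} (hba : b ≤ a) (ha : 1 ≤ a)
    (hA : 0 < A) (hB : 0 < B) (hBK : B ≤ K) (hKAB : K ≤ A + B) :
    K ^ b * (1 / (A ^ a * B ^ b)) ≤ 2 ^ (a - 1) * (1 / A ^ a + 1 / B ^ a) := by
  have hK : 0 < K := hB.trans_le hBK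
  calc K ^ b * (1 / (A ^ a * B ^ b)) = (K / B) ^ b / A ^ a := by
        rw [Real.div_rpow hK.le hB.le]; ring
    _ ≤ (K / B) ^ a / A ^ a := by
        gcongr
        exact (one_le_div hB).2 hBK
    _ = (1 / A * (K / B)) ^ a := by
        rw [Real.mul_rpow (by positivity) (by positivity), Real.div_rpow zero_le_one hA.le,
          Real.one_rpow]
        ring
    _ ≤ (1 / A + 1 / B) ^ a := by
        gcongr
        rw [div_add_div _ _ hA.ne' hB.ne', div_mul_div_comm, one_mul]
        gcongr
        linarith
    _ ≤ 2 ^ (a - 1) * ((1 / A) ^ a + (1 / B) ^ a) :=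
        Real.rpow_add_le_mul_rpow_add_rpow (by positivity) (by positivity) ha
    _ = 2 ^ (a - 1) * (1 / A ^ a + 1 / B ^ a) := by
        rw [Real.div_rpow zero_le_one hA.le, Real.div_rpow zero_le_one hB.le, Real.one_rpow]

lemma summable_one_div_nat_add_one_rpow {p : ℝ} (hp : 1 < p) :
    Summable fun n : ℕ => 1 / ((n : ℝ) + 1) ^ p := by
  simpa using (summable_nat_add_iff 1).2 (Real.summable_one_div_nat_rpow.2 hp)

/-- key combinatorial inequality. -/
theorem stmt13 (a1 b1 : ℝ) (h1 : 1 < a1) (hb : b1 ≤ a1) :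
    ∃ C : ℝ, ∀ k : ℕ,
      ((k : ℝ) + 1) ^ b1 *
        ∑ m ∈ Finset.range (k + 1),
          1 / (((m : ℝ) + 1) ^ a1 * (((k - m : ℕ) : ℝ) + 1) ^ b1) ≤ C := by
  set f : ℕ → ℝ := fun n => 1 / ((n : ℝ) + 1) ^ a1
  have hf := summable_one_div_nat_add_one_rpow h1
  have partial_le (k : ℕ) : ∑ m ∈ range (k + 1), f m ≤ ∑' n, f n :=
    hf.sum_le_tsum _ fun n _ => by positivity
  refine ⟨2 ^ (a1 - 1) * (∑' n, f n + ∑' n, f n), fun k => ?_⟩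
  calc _ = ∑ m ∈ range (k + 1),
        ((k : ℝ) + 1) ^ b1 * (1 / (((m : ℝ) + 1) ^ a1 * (((k - m : ℕ) : ℝ) + 1) ^ b1)) :=
        mul_sum _ _ _
    _ ≤ ∑ m ∈ range (k + 1), 2 ^ (a1 - 1) * (f m + f (k - m)) := by
        refine sum_le_sum fun m hm => ?_
        have hmk : m ≤ k := Nat.lt_succ_iff.1 (mem_range.1 hm)
        refine rpow_mul_one_div_rpow_mul_rpow_le hb h1.le (by positivity) (by positivity) ?_ ?_
          <;> · push_cast [hmk]; linarith [(m.cast_nonneg : (0 : ℝ) ≤ m)]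
    _ = 2 ^ (a1 - 1) * (∑ m ∈ range (k + 1), f m + ∑ m ∈ range (k + 1), f m) := by
        rw [← mul_sum, sum_add_distrib, ← sum_range_reflect f (k + 1), Nat.add_sub_cancel]
    _ ≤ 2 ^ (a1 - 1) * (∑' n, f n + ∑' n, f n) := by
        gcongr <;> exact partial_le k
end

section
/- If f ∈ D_{(α₁,α₂)} on the unit bidisc and w₀ ∈ 𝕌 is fixed, then the slice function f_{w₀}(z) = f(z, w₀) belongs to the one-variable Dirichlet type space D_{α₁} on the unit disc; moreover ‖f_{w₀}‖²_{α₁} ≤ (1-|w₀|)^{-1}(C_{w₀} + ‖f‖²_α) for some finite constant C_{w₀}. -/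
open scoped BigOperators

/-! Expanding in `w`, the slice `z ↦ f (z, w)` has Taylor coefficients `b_k = ∑_l a_{k,l} w^l`.
Cauchy–Schwarz against the weights `(l+1)^{α₂}` gives
`|b_k|² ≤ K(w) ∑_l |a_{k,l}|² (l+1)^{α₂}` with `K(w) = ∑_l |w|^{2l} / (l+1)^{α₂}`, finite since
`|w| < 1`. Multiplying by `(k+1)^{α₁}` and summing over `k` yields `‖f_w‖²_{α₁} ≤ K(w) ‖f‖²_α`,
which is the claimed bound with `C_w = (1 - |w|) K(w) ‖f‖²_α`. -/

lemma summable_rpow_mul_geometric (c : ℝ) {t : ℝ} (ht0 : 0 ≤ t) (ht1 : t < 1) :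
    Summable fun l : ℕ => ((l : ℝ) + 1) ^ c * t ^ l := by
  obtain ⟨n, hn⟩ := exists_nat_ge c
  have hpoly : Summable fun l : ℕ => 2 ^ n * ((l : ℝ) ^ n * t ^ l) :=
    (summable_pow_mul_geometric_of_norm_lt_one (R := ℝ) n
      (by rwa [Real.norm_of_nonneg ht0])).mul_left _
  refine hpoly.of_norm_bounded_eventually_nat ?_
  filter_upwards [Filter.eventually_ge_atTop 1] with l hl
  have hl' : (1 : ℝ) ≤ l := by exact_mod_cast hl
  rw [Real.norm_of_nonneg (by positivity), ← mul_assoc, ← mul_pow]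
  gcongr
  calc ((l : ℝ) + 1) ^ c ≤ ((l : ℝ) + 1) ^ (n : ℝ) :=
        Real.rpow_le_rpow_of_exponent_le (by linarith) hn
    _ = ((l : ℝ) + 1) ^ n := Real.rpow_natCast _ n
    _ ≤ (2 * l) ^ n := by gcongr; linarith

lemma summable_and_sq_tsum_le_of_sq_le_mul {ι : Type*} {u A B : ι → ℝ} (hu : 0 ≤ u)
    (hA : 0 ≤ A) (hB : 0 ≤ B) (huAB : ∀ i, u i ^ 2 ≤ A i * B i) (hAs : Summable A)
    (hBs : Summable B) :
    Summable u ∧ (∑' i, u i) ^ 2 ≤ (∑' i, A i) * ∑' i, B i := by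
  have hsq : ∀ {X : ι → ℝ}, 0 ≤ X → ∀ i, √(X i) ^ (2 : ℝ) = X i := fun hX i => by
    rw [Real.rpow_two, Real.sq_sqrt (hX i)]
  have hle : ∀ i, u i ≤ √(A i) * √(B i) := fun i => by
    rw [← Real.sqrt_mul (hA i)]
    exact Real.le_sqrt_of_sq_le (huAB i)
  obtain ⟨hs, hholder⟩ := Real.summable_and_inner_le_Lp_mul_Lq_tsum_of_nonneg
    Real.HolderConjugate.two_two (fun i => Real.sqrt_nonneg (A i))
    (fun i => Real.sqrt_nonneg (B i)) (by simpa only [hsq hA] using hAs)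
    (by simpa only [hsq hB] using hBs)
  simp only [hsq hA, hsq hB] at hholder
  have hus : Summable u := hs.of_nonneg_of_le hu hle
  refine ⟨hus, ?_⟩
  calc (∑' i, u i) ^ 2 ≤ ((∑' i, A i) ^ (1 / 2 : ℝ) * (∑' i, B i) ^ (1 / 2 : ℝ)) ^ 2 := by
        gcongr
        · exact tsum_nonneg hu
        · exact (hus.tsum_le_tsum hle hs).trans hholder
    _ = (∑' i, A i) * ∑' i, B i := by
        rw [mul_pow, ← Real.sqrt_eq_rpow, ← Real.sqrt_eq_rpow, Real.sq_sqrt (tsum_nonneg hA),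
          Real.sq_sqrt (tsum_nonneg hB)]

/-- The squared norm `‖k_w‖²` of the reproducing kernel of `D_s` at `w`. -/
noncomputable def kernelDiag (s : ℝ) (w : ℂ) : ℝ :=
  ∑' l : ℕ, ((l : ℝ) + 1) ^ (-s) * (‖w‖ ^ 2) ^ l

lemma summable_norm_mul_pow_and_sq_norm_tsum_le {s : ℝ} {c : ℕ → ℂ} (hc : Summable (wt1 s c))
    {w : ℂ} (hw : ‖w‖ < 1) :
    Summable (fun l => ‖c l * w ^ l‖) ∧
      ‖∑' l, c l * w ^ l‖ ^ 2 ≤ (∑' l, wt1 s c l) * kernelDiag s w := by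
  have hsplit : ∀ l : ℕ,
      ‖c l * w ^ l‖ ^ 2 = wt1 s c l * (((l : ℝ) + 1) ^ (-s) * (‖w‖ ^ 2) ^ l) := by
    intro l
    have hone : ((l : ℝ) + 1) ^ s * ((l : ℝ) + 1) ^ (-s) = 1 := by
      rw [← Real.rpow_add (by positivity), add_neg_cancel, Real.rpow_zero]
    rw [wt1, norm_mul, norm_pow, mul_pow, ← pow_mul, ← pow_mul]
    linear_combination (‖c l‖ ^ 2 * ‖w‖ ^ (2 * l)) * hone.symm
  obtain ⟨hsum, hsq⟩ := summable_and_sq_tsum_le_of_sq_le_mul (fun l => norm_nonneg _)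
    (fun l => by unfold wt1; positivity) (fun l => by positivity) (fun l => (hsplit l).le) hc
    (summable_rpow_mul_geometric (-s) (by positivity) (by nlinarith [norm_nonneg w]))
  refine ⟨hsum, le_trans ?_ hsq⟩
  gcongr
  exact norm_tsum_le_tsum_norm hsum

noncomputable def sliceCoeff (a : ℕ → ℕ → ℂ) (w : ℂ) (k : ℕ) : ℂ :=
  ∑' l, a k l * w ^ l

lemma isCoeff1_slice {f : ℂ × ℂ → ℂ} {a : ℕ → ℕ → ℂ} (hc : IsCoeff f a) {w : ℂ} (hw : ‖w‖ < 1)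
    (hrow : ∀ k, Summable fun l => a k l * w ^ l) :
    IsCoeff1 (fun z => f (z, w)) (sliceCoeff a w) := by
  intro z hz
  refine (hc (z, w) ⟨hz, hw⟩).prod_fiberwise fun k => ?_
  simpa only [sliceCoeff, mul_right_comm] using (hrow k).hasSum.mul_right (z ^ k)

lemma wt_nonneg (a1 a2 : ℝ) (a : ℕ → ℕ → ℂ) : 0 ≤ wt a1 a2 a :=
  fun kl => by unfold wt; positivity

lemma wt_eq_mul_wt1 (a1 a2 : ℝ) (a : ℕ → ℕ → ℂ) (k l : ℕ) :
    wt a1 a2 a (k, l) = ((k : ℝ) + 1) ^ a1 * wt1 a2 (a k) l := by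
  unfold wt wt1
  ring

lemma summable_wt1_row {a1 a2 : ℝ} {a : ℕ → ℕ → ℂ} (hs : Summable (wt a1 a2 a)) (k : ℕ) :
    Summable (wt1 a2 (a k)) := by
  have hk : ((k : ℝ) + 1) ^ a1 ≠ 0 := by positivity
  simpa only [wt_eq_mul_wt1, summable_mul_left_iff hk] using
    ((summable_prod_of_nonneg (wt_nonneg a1 a2 a)).1 hs).1 k

lemma wt1_sliceCoeff_le {a1 a2 : ℝ} {a : ℕ → ℕ → ℂ} (hs : Summable (wt a1 a2 a)) {w : ℂ}
    (hw : ‖w‖ < 1) (k : ℕ) :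
    wt1 a1 (sliceCoeff a w) k ≤ kernelDiag a2 w * ∑' l, wt a1 a2 a (k, l) := by
  have heval := (summable_norm_mul_pow_and_sq_norm_tsum_le (summable_wt1_row hs k) hw).2
  simp only [wt_eq_mul_wt1, tsum_mul_left]
  rw [wt1, sliceCoeff]
  calc ‖∑' l, a k l * w ^ l‖ ^ 2 * ((k : ℝ) + 1) ^ a1
      ≤ (∑' l, wt1 a2 (a k) l) * kernelDiag a2 w * ((k : ℝ) + 1) ^ a1 := by gcongr
    _ = _ := by ring

lemma summable_wt1_sliceCoeff_and_tsum_le {a1 a2 : ℝ} {a : ℕ → ℕ → ℂ}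
    (hs : Summable (wt a1 a2 a)) {w : ℂ} (hw : ‖w‖ < 1) :
    Summable (wt1 a1 (sliceCoeff a w)) ∧
      ∑' k, wt1 a1 (sliceCoeff a w) k ≤ kernelDiag a2 w * ∑' kl, wt a1 a2 a kl := by
  obtain ⟨hrows, hcols⟩ := (summable_prod_of_nonneg (wt_nonneg a1 a2 a)).1 hs
  have hdom := hcols.mul_left (kernelDiag a2 w)
  have hsum : Summable (wt1 a1 (sliceCoeff a w)) :=
    hdom.of_nonneg_of_le (fun k => by unfold wt1; positivity) (wt1_sliceCoeff_le hs hw)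
  refine ⟨hsum, ?_⟩
  rw [hs.tsum_prod' hrows, ← tsum_mul_left]
  exact hsum.tsum_le_tsum (wt1_sliceCoeff_le hs hw) hdom

/-- slices of `D_{(α₁,α₂)}` functions lie in `D_{α₁}`, with the
quantitative bound `‖f_{w₀}‖² ≤ (1-|w₀|)⁻¹ (C_{w₀} + ‖f‖²_α)`. -/
theorem stmt16 (a1 a2 : ℝ) (f : ℂ × ℂ → ℂ) (a : ℕ → ℕ → ℂ)
    (hc : IsCoeff f a) (hs : Summable (wt a1 a2 a))
    (w₀ : ℂ) (hw : ‖w₀‖ < 1) :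
    ∃ b : ℕ → ℂ, IsCoeff1 (fun z => f (z, w₀)) b ∧ Summable (wt1 a1 b) ∧
      ∃ C : ℝ, 0 ≤ C ∧
        (∑' k : ℕ, wt1 a1 b k) ≤
          (1 - ‖w₀‖)⁻¹ * (C + ∑' kl : ℕ × ℕ, wt a1 a2 a kl) := by
  have hrow k := (summable_norm_mul_pow_and_sq_norm_tsum_le (summable_wt1_row hs k) hw).1.of_norm
  obtain ⟨hsum, hle⟩ := summable_wt1_sliceCoeff_and_tsum_le hs hw
  set K := kernelDiag a2 w₀
  set T := ∑' kl, wt a1 a2 a kl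
  have hK : 0 ≤ K := tsum_nonneg fun l => by positivity
  have hT : 0 ≤ T := tsum_nonneg (wt_nonneg a1 a2 a)
  have hr : 0 < 1 - ‖w₀‖ := sub_pos.2 hw
  refine ⟨sliceCoeff a w₀, isCoeff1_slice hc hw hrow, hsum, (1 - ‖w₀‖) * K * T, by positivity, ?_⟩
  calc ∑' k, wt1 a1 (sliceCoeff a w₀) k ≤ K * T := hle
    _ = (1 - ‖w₀‖)⁻¹ * ((1 - ‖w₀‖) * K * T) := by field_simp
    _ ≤ (1 - ‖w₀‖)⁻¹ * ((1 - ‖w₀‖) * K * T + T) := by gcongr; linarith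
end

section
/- For any α = (α₁,α₂) ∈ ℝ², the function f(z,w) = Σ_{k,l} a_{k,l} z^k w^l with a_{k,l} = ((k+1)^{1-α₁}(l+1)^{1-α₂} / ((k+1)³ + (l+1)³))^{1/2} has every horizontal slice f_w in the one-variable space D_{α₁} and every vertical slice f_z in D_{α₂}, yet f itself is not in D_{(α₁,α₂)}; in particular ‖f‖²_α = Σ_{k,l} (k+1)(l+1)/((k+1)³+(l+1)³) = ∞. -/
/-! The denominator `(k+1)³ + (l+1)³` is at least `(k+1)³`, so
`a_{k,l} ≤ (k+1)^{-1-α₁/2} (l+1)^{(1-α₂)/2}`. Hence the coefficient `Σ_l a_{k,l} w^l` of `z^k`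
in a horizontal slice is `O((k+1)^{-1-α₁/2})`, and the `D_{α₁}` norm of the slice is dominated by
`Σ (k+1)^{-2}`; vertical slices are symmetric. On the other hand the weighted squares of the
coefficients are `(k+1)(l+1)/((k+1)³+(l+1)³)`, which on the diagonal is the harmonic series
`1/(2(k+1))`. Since coefficients of a double power series on the bidisc are unique,
`f ∉ D_{(α₁,α₂)}`. -/

open scoped BigOperators

open Filter Topology

theorem eq_zero_of_eventually_hasSum_mul_pow_zero {𝕜 : Type*} [NontriviallyNormedField 𝕜]
    {b : ℕ → 𝕜} (h : ∀ᶠ z in 𝓝 (0 : 𝕜), HasSum (fun n => b n * z ^ n) 0) : b = 0 := by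
  obtain ⟨ε, hε, hball⟩ := Metric.eventually_nhds_iff_ball.1 h
  obtain ⟨z₀, hz₀, hz₀ε⟩ := NormedField.exists_norm_lt 𝕜 hε
  set p := FormalMultilinearSeries.ofScalars 𝕜 b
  have hr : (‖z₀‖₊ : ENNReal) ≤ p.radius := by
    refine p.le_radius_of_tendsto (l := 0) ?_
    simpa [p, norm_mul, norm_pow] using
      (hball z₀ (mem_ball_zero_iff.2 hz₀ε)).summable.tendsto_atTop_zero.norm
  have hp : HasFPowerSeriesOnBall 0 p 0 ‖z₀‖₊ :=
    { r_le := hr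
      r_pos := by simpa using hz₀
      hasSum := fun {y} hy => by
        have hy : ‖y‖ < ‖z₀‖ := by simpa using hy
        simpa [p, FormalMultilinearSeries.ofScalars_apply_eq, mul_comm] using
          hball y (mem_ball_zero_iff.2 (hy.trans hz₀ε)) }
  exact (FormalMultilinearSeries.ofScalars_series_eq_zero 𝕜).1 hp.hasFPowerSeriesAt.eq_zero

theorem eq_zero_of_hasSum_mul_pow_zero_on_unitDisc {b : ℕ → ℂ}
    (h : ∀ z : ℂ, ‖z‖ < 1 → HasSum (fun n => b n * z ^ n) 0) : b = 0 :=
  eq_zero_of_eventually_hasSum_mul_pow_zero <|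
    Metric.eventually_nhds_iff_ball.2 ⟨1, one_pos, fun z hz => h z (mem_ball_zero_iff.1 hz)⟩

theorem HasSum.hasSum_tsum_row_mul_pow {c : ℕ → ℕ → ℂ} {z w s : ℂ}
    (h : HasSum (fun kl : ℕ × ℕ => c kl.1 kl.2 * z ^ kl.1 * w ^ kl.2) s) :
    HasSum (fun k => (∑' l, c k l * w ^ l) * z ^ k) s :=
  h.prod_fiberwise fun k => by
    have hs : Summable fun l => c k l * z ^ k * w ^ l :=
      h.summable.comp_injective (i := Prod.mk k) (Prod.mk_right_injective k)
    rw [← tsum_mul_right]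
    simpa only [mul_right_comm _ (z ^ k)] using hs.hasSum

theorem IsCoeff.eq_zero {a : ℕ → ℕ → ℂ} (h : IsCoeff 0 a) : a = 0 := by
  have hrow : ∀ w : ℂ, ‖w‖ < 1 → ∀ k, ∑' l, a k l * w ^ l = 0 := fun w hw =>
    congrFun <| eq_zero_of_hasSum_mul_pow_zero_on_unitDisc (b := fun k => ∑' l, a k l * w ^ l)
      fun z hz => (h (z, w) ⟨hz, hw⟩).hasSum_tsum_row_mul_pow
  ext k : 1
  refine eq_zero_of_hasSum_mul_pow_zero_on_unitDisc fun w hw => ?_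
  have hhalf : ‖(1 / 2 : ℂ)‖ < 1 := by norm_num
  have hs : Summable fun l => a k l * (1 / 2 : ℂ) ^ k * w ^ l :=
    (h (1 / 2, w) ⟨hhalf, hw⟩).summable.comp_injective (i := Prod.mk k) (Prod.mk_right_injective k)
  simp_rw [mul_right_comm _ ((1 / 2 : ℂ) ^ k)] at hs
  simpa [hrow w hw k] using ((summable_mul_right_iff (by norm_num)).1 hs).hasSum

theorem IsCoeff.unique {f : ℂ × ℂ → ℂ} {a a' : ℕ → ℕ → ℂ} (h : IsCoeff f a)
    (h' : IsCoeff f a') : a = a' :=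
  sub_eq_zero.1 <| IsCoeff.eq_zero fun p hp => by
    simpa [sub_mul] using (h p hp).sub (h' p hp)

theorem IsCoeff.memD_iff {f : ℂ × ℂ → ℂ} {a : ℕ → ℕ → ℂ} (h : IsCoeff f a) (a1 a2 : ℝ) :
    MemD a1 a2 f ↔ Summable (wt a1 a2 a) :=
  ⟨fun ⟨_, ha', hs⟩ => ha'.unique h ▸ hs, fun hs => ⟨a, h, hs⟩⟩

theorem summable_rpow_mul_geometric_s17 (β : ℝ) {r : ℝ} (hr₀ : 0 ≤ r) (hr₁ : r < 1) :
    Summable fun k : ℕ => ((k : ℝ) + 1) ^ β * r ^ k := by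
  obtain ⟨n, hn⟩ := exists_nat_ge β
  have hgeom : Summable fun k : ℕ => (k : ℝ) ^ n * r ^ k :=
    summable_pow_mul_geometric_of_norm_lt_one n (by rwa [Real.norm_of_nonneg hr₀])
  refine Summable.of_norm_bounded_eventually_nat (hgeom.mul_left (2 ^ n)) ?_
  filter_upwards [eventually_ge_atTop 1] with k hk
  have hk : (1 : ℝ) ≤ k := by exact_mod_cast hk
  rw [Real.norm_of_nonneg (by positivity)]
  calc ((k : ℝ) + 1) ^ β * r ^ k ≤ ((k : ℝ) + 1) ^ (n : ℝ) * r ^ k := by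
        gcongr
        linarith
    _ ≤ (2 * k) ^ n * r ^ k := by
        rw [Real.rpow_natCast]
        gcongr
        linarith
    _ = 2 ^ n * ((k : ℝ) ^ n * r ^ k) := by ring

theorem summable_nat_add_one_rpow {s : ℝ} (hs : s < -1) :
    Summable fun k : ℕ => ((k : ℝ) + 1) ^ s := by
  simpa using (summable_nat_add_iff 1).2 (Real.summable_nat_rpow.2 hs)

section Slices

variable {c : ℕ → ℕ → ℂ} {p q α : ℝ}

theorem summable_norm_mul_pow_mul_pow
    (hc : ∀ k l, ‖c k l‖ ≤ ((k : ℝ) + 1) ^ p * ((l : ℝ) + 1) ^ q) {z w : ℂ}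
    (hz : ‖z‖ < 1) (hw : ‖w‖ < 1) :
    Summable fun kl : ℕ × ℕ => ‖c kl.1 kl.2 * z ^ kl.1 * w ^ kl.2‖ := by
  refine Summable.of_nonneg_of_le (fun _ => norm_nonneg _) (fun kl => ?_)
    ((summable_rpow_mul_geometric_s17 p (norm_nonneg z) hz).mul_of_nonneg
      (summable_rpow_mul_geometric_s17 q (norm_nonneg w) hw)
      (fun _ => by positivity) (fun _ => by positivity))
  calc ‖c kl.1 kl.2 * z ^ kl.1 * w ^ kl.2‖ = ‖c kl.1 kl.2‖ * (‖z‖ ^ kl.1 * ‖w‖ ^ kl.2) := by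
        rw [norm_mul, norm_mul, norm_pow, norm_pow, mul_assoc]
    _ ≤ (((kl.1 : ℝ) + 1) ^ p * ((kl.2 : ℝ) + 1) ^ q) * (‖z‖ ^ kl.1 * ‖w‖ ^ kl.2) := by
        gcongr
        exact hc _ _
    _ = _ := by ring

theorem memD1_horizontalSlice
    (hc : ∀ k l, ‖c k l‖ ≤ ((k : ℝ) + 1) ^ p * ((l : ℝ) + 1) ^ q) (hpα : 2 * p + α < -1)
    {w : ℂ} (hw : ‖w‖ < 1) :
    MemD1 α fun z => ∑' kl : ℕ × ℕ, c kl.1 kl.2 * z ^ kl.1 * w ^ kl.2 := by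
  set C := ∑' l : ℕ, ((l : ℝ) + 1) ^ q * ‖w‖ ^ l
  have hrow_le : ∀ k, ‖∑' l, c k l * w ^ l‖ ≤ ((k : ℝ) + 1) ^ p * C := fun k =>
    tsum_of_norm_bounded ((summable_rpow_mul_geometric_s17 q (norm_nonneg w) hw).hasSum.mul_left _)
      fun l => by
        rw [norm_mul, norm_pow, ← mul_assoc]
        gcongr
        exact hc k l
  refine ⟨fun k => ∑' l, c k l * w ^ l, fun z hz => ?_, ?_⟩
  · exact (summable_norm_mul_pow_mul_pow hc hz hw).of_norm.hasSum.hasSum_tsum_row_mul_pow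
  · refine Summable.of_nonneg_of_le (fun _ => by unfold wt1; positivity) (fun k => ?_)
      ((summable_nat_add_one_rpow hpα).mul_left (C ^ 2))
    have hk : (0 : ℝ) ≤ k + 1 := by positivity
    calc wt1 α (fun k => ∑' l, c k l * w ^ l) k
        ≤ (((k : ℝ) + 1) ^ p * C) ^ 2 * ((k : ℝ) + 1) ^ α := by
          unfold wt1
          gcongr
          exact hrow_le k
      _ = C ^ 2 * ((k : ℝ) + 1) ^ (2 * p + α) := by
          rw [Real.rpow_add (by positivity), mul_comm 2 p, Real.rpow_mul hk, Real.rpow_two]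
          ring

theorem memD1_verticalSlice
    (hc : ∀ k l, ‖c k l‖ ≤ ((k : ℝ) + 1) ^ q * ((l : ℝ) + 1) ^ p) (hpα : 2 * p + α < -1)
    {z : ℂ} (hz : ‖z‖ < 1) :
    MemD1 α fun w => ∑' kl : ℕ × ℕ, c kl.1 kl.2 * z ^ kl.1 * w ^ kl.2 := by
  convert memD1_horizontalSlice (c := fun l k => c k l)
    (fun l k => (hc k l).trans_eq (mul_comm _ _)) hpα hz using 2 with w
  rw [← (Equiv.prodComm ℕ ℕ).tsum_eq]
  simp [mul_right_comm]

end Slices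

noncomputable def counterexampleCoeff (a1 a2 : ℝ) (k l : ℕ) : ℝ :=
  Real.sqrt (((k : ℝ) + 1) ^ (1 - a1) * ((l : ℝ) + 1) ^ (1 - a2) /
    (((k : ℝ) + 1) ^ (3 : ℕ) + ((l : ℝ) + 1) ^ (3 : ℕ)))

theorem counterexampleCoeff_swap (a1 a2 : ℝ) (k l : ℕ) :
    counterexampleCoeff a1 a2 k l = counterexampleCoeff a2 a1 l k := by
  simp only [counterexampleCoeff, mul_comm, add_comm]

theorem counterexampleCoeff_le (a1 a2 : ℝ) (k l : ℕ) :
    counterexampleCoeff a1 a2 k l ≤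
      ((k : ℝ) + 1) ^ ((-2 - a1) / 2) * ((l : ℝ) + 1) ^ ((1 - a2) / 2) := by
  have hk : (0 : ℝ) < k + 1 := by positivity
  rw [counterexampleCoeff, Real.sqrt_le_left (by positivity), mul_pow,
    ← Real.rpow_mul_natCast hk.le, ← Real.rpow_mul_natCast (by positivity)]
  calc ((k : ℝ) + 1) ^ (1 - a1) * ((l : ℝ) + 1) ^ (1 - a2) /
        (((k : ℝ) + 1) ^ (3 : ℕ) + ((l : ℝ) + 1) ^ (3 : ℕ))
      ≤ ((k : ℝ) + 1) ^ (1 - a1) * ((l : ℝ) + 1) ^ (1 - a2) / ((k : ℝ) + 1) ^ (3 : ℕ) := by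
        gcongr
        exact le_add_of_nonneg_right (by positivity)
    _ = _ := by
        rw [mul_div_right_comm, ← Real.rpow_sub_natCast hk.ne']
        congr 2 <;> push_cast <;> ring

theorem counterexampleCoeff_sq_mul_rpow_mul_rpow (a1 a2 : ℝ) (k l : ℕ) :
    counterexampleCoeff a1 a2 k l ^ 2 * ((k : ℝ) + 1) ^ a1 * ((l : ℝ) + 1) ^ a2 =
      ((k : ℝ) + 1) * ((l : ℝ) + 1) / (((k : ℝ) + 1) ^ (3 : ℕ) + ((l : ℝ) + 1) ^ (3 : ℕ)) := by
  have hk : (0 : ℝ) < k + 1 := by positivity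
  have hl : (0 : ℝ) < l + 1 := by positivity
  rw [counterexampleCoeff, Real.sq_sqrt (by positivity), div_mul_eq_mul_div, div_mul_eq_mul_div,
    mul_assoc (_ * _), mul_mul_mul_comm, ← Real.rpow_add hk, ← Real.rpow_add hl]
  norm_num

theorem not_summable_mul_div_cube_add_cube :
    ¬ Summable fun kl : ℕ × ℕ =>
      ((kl.1 : ℝ) + 1) * ((kl.2 : ℝ) + 1) /
        (((kl.1 : ℝ) + 1) ^ (3 : ℕ) + ((kl.2 : ℝ) + 1) ^ (3 : ℕ)) := by
  intro h
  have hdiag : Summable fun k : ℕ =>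
      ((k : ℝ) + 1) * ((k : ℝ) + 1) / (((k : ℝ) + 1) ^ (3 : ℕ) + ((k : ℝ) + 1) ^ (3 : ℕ)) :=
    h.comp_injective (i := fun k => (k, k)) fun _ _ h => congrArg Prod.fst h
  have hharmonic : Summable fun k : ℕ => 1 / ((k : ℝ) + 1) :=
    (hdiag.mul_left 2).congr fun k => by field_simp; ring
  exact Real.not_summable_one_div_natCast ((summable_nat_add_iff 1).1 (by exact_mod_cast hharmonic))

/-- a function all of whose slices lie in the one-variable
Dirichlet type spaces, but which is not in `D_{(α₁,α₂)}`. -/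
theorem stmt17 (a1 a2 : ℝ) :
    (∀ w ∈ UnitDisc, MemD1 a1 (fun z : ℂ =>
      ∑' kl : ℕ × ℕ,
        ((Real.sqrt (((kl.1 : ℝ) + 1) ^ (1 - a1) * ((kl.2 : ℝ) + 1) ^ (1 - a2) /
          (((kl.1 : ℝ) + 1) ^ (3 : ℕ) + ((kl.2 : ℝ) + 1) ^ (3 : ℕ))) : ℂ)
          * z ^ kl.1 * w ^ kl.2))) ∧
    (∀ z ∈ UnitDisc, MemD1 a2 (fun w : ℂ =>
      ∑' kl : ℕ × ℕ,
        ((Real.sqrt (((kl.1 : ℝ) + 1) ^ (1 - a1) * ((kl.2 : ℝ) + 1) ^ (1 - a2) /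
          (((kl.1 : ℝ) + 1) ^ (3 : ℕ) + ((kl.2 : ℝ) + 1) ^ (3 : ℕ))) : ℂ)
          * z ^ kl.1 * w ^ kl.2))) ∧
    ¬ MemD a1 a2 (fun p : ℂ × ℂ =>
      ∑' kl : ℕ × ℕ,
        ((Real.sqrt (((kl.1 : ℝ) + 1) ^ (1 - a1) * ((kl.2 : ℝ) + 1) ^ (1 - a2) /
          (((kl.1 : ℝ) + 1) ^ (3 : ℕ) + ((kl.2 : ℝ) + 1) ^ (3 : ℕ))) : ℂ)
          * p.1 ^ kl.1 * p.2 ^ kl.2)) ∧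
    ¬ Summable (fun kl : ℕ × ℕ =>
      ((kl.1 : ℝ) + 1) * ((kl.2 : ℝ) + 1) /
        (((kl.1 : ℝ) + 1) ^ (3 : ℕ) + ((kl.2 : ℝ) + 1) ^ (3 : ℕ))) := by
  have hcoeff : ∀ k l, ‖(counterexampleCoeff a1 a2 k l : ℂ)‖ = counterexampleCoeff a1 a2 k l :=
    fun k l => (Complex.norm_real _).trans (Real.norm_of_nonneg (Real.sqrt_nonneg _))
  have hc : ∀ k l, ‖(counterexampleCoeff a1 a2 k l : ℂ)‖ ≤
      ((k : ℝ) + 1) ^ ((-2 - a1) / 2) * ((l : ℝ) + 1) ^ ((1 - a2) / 2) := fun k l =>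
    (hcoeff k l).trans_le (counterexampleCoeff_le a1 a2 k l)
  have hc' : ∀ k l, ‖(counterexampleCoeff a1 a2 k l : ℂ)‖ ≤
      ((k : ℝ) + 1) ^ ((1 - a1) / 2) * ((l : ℝ) + 1) ^ ((-2 - a2) / 2) := fun k l => by
    rw [hcoeff, counterexampleCoeff_swap, mul_comm]
    exact counterexampleCoeff_le a2 a1 l k
  have hexp : ∀ a : ℝ, 2 * ((-2 - a) / 2) + a < -1 := fun a => by linarith
  have hf : IsCoeff _ fun k l => (counterexampleCoeff a1 a2 k l : ℂ) := fun p hp =>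
    (summable_norm_mul_pow_mul_pow hc hp.1 hp.2).of_norm.hasSum
  refine ⟨fun w hw => memD1_horizontalSlice hc (hexp a1) hw,
    fun z hz => memD1_verticalSlice hc' (hexp a2) hz, ?_, not_summable_mul_div_cube_add_cube⟩
  refine (hf.memD_iff a1 a2).not.2 fun hs =>
    not_summable_mul_div_cube_add_cube (hs.congr fun kl => ?_)
  rw [wt, hcoeff]
  exact counterexampleCoeff_sq_mul_rpow_mul_rpow a1 a2 kl.1 kl.2
end

section
/- If h is a multiplier from D_{(α₁,α₂)} to D_{(β₁,β₂)} on the bidisc, then for each fixed w₀ ∈ 𝕌 the slice h_{w₀}(z) = h(z,w₀) is a multiplier from the one-variable space D_{α₁} to D_{β₁}, and for each fixed z₀ ∈ 𝕌 the slice h_{z₀} is a multiplier from D_{α₂} to D_{β₂}. -/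
open scoped BigOperators

/-!
Extend `g ∈ D_{α₁}` to `f(z, w) = g(z)`, which lies in `D_{(α₁,α₂)}`; then `h f ∈ D_{(β₁,β₂)}`,
and its slice at `w₀` is `h(·, w₀) g`. Slicing is bounded from `D_{(β₁,β₂)}` to `D_{β₁}`: the
`k`-th coefficient of the slice is `∑ₗ c_{kl} w₀ˡ`, and Cauchy–Schwarz with the weights
`(l+1)^{±β₂}` bounds its square by `(∑ₗ |c_{kl}|² (l+1)^{β₂}) · ∑ₗ (l+1)^{-β₂} |w₀|^{2l}`,
the last series converging because `|w₀| < 1`. The second slice follows by swapping variables.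
-/

lemma summable_add_one_rpow_mul_geometric (t : ℝ) {r : ℝ} (h0 : 0 ≤ r) (h1 : r < 1) :
    Summable fun n : ℕ => ((n : ℝ) + 1) ^ t * r ^ n := by
  set N := ⌈t⌉₊
  have hr : ‖r‖ < 1 := by rwa [Real.norm_of_nonneg h0]
  refine (summable_descFactorial_mul_geometric_of_norm_lt_one N hr).of_nonneg_of_le
    (fun n => by positivity) fun n => ?_
  have hpow : ((n : ℝ) + 1) ^ t ≤ ((n : ℝ) + 1) ^ N := by
    rw [← Real.rpow_natCast]
    exact Real.rpow_le_rpow_of_exponent_le (by linarith [n.cast_nonneg (α := ℝ)]) (Nat.le_ceil t)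
  have hfac : ((n : ℝ) + 1) ^ N ≤ (n + N).descFactorial N := by
    have := Nat.pow_sub_le_descFactorial (n + N) N
    rw [Nat.add_right_comm, Nat.add_sub_cancel] at this
    exact_mod_cast this
  gcongr
  exact hpow.trans hfac

lemma summable_mul_and_sq_tsum_mul_le {ι : Type*} {u v : ι → ℝ} (hu : ∀ i, 0 ≤ u i)
    (hv : ∀ i, 0 ≤ v i) (hU : Summable fun i => u i ^ 2) (hV : Summable fun i => v i ^ 2) :
    Summable (fun i => u i * v i) ∧
      (∑' i, u i * v i) ^ 2 ≤ (∑' i, u i ^ 2) * ∑' i, v i ^ 2 := by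
  obtain ⟨hsum, hle⟩ := Real.summable_and_inner_le_Lp_mul_Lq_tsum_of_nonneg
    Real.HolderConjugate.two_two hu hv (by simpa only [Real.rpow_two] using hU)
    (by simpa only [Real.rpow_two] using hV)
  simp only [Real.rpow_two, ← Real.sqrt_eq_rpow] at hle
  refine ⟨hsum, ?_⟩
  calc (∑' i, u i * v i) ^ 2 ≤ (√(∑' i, u i ^ 2) * √(∑' i, v i ^ 2)) ^ 2 :=
        pow_le_pow_left₀ (tsum_nonneg fun i => mul_nonneg (hu i) (hv i)) hle 2
    _ = (∑' i, u i ^ 2) * ∑' i, v i ^ 2 := by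
        rw [mul_pow, Real.sq_sqrt (tsum_nonneg fun i => sq_nonneg _),
          Real.sq_sqrt (tsum_nonneg fun i => sq_nonneg _)]

lemma summable_and_norm_tsum_mul_pow_sq_le {c : ℕ → ℂ} {β : ℝ} {w : ℂ} (hw : ‖w‖ < 1)
    (hc : Summable fun l : ℕ => ‖c l‖ ^ 2 * ((l : ℝ) + 1) ^ β) :
    Summable (fun l => c l * w ^ l) ∧
      ‖∑' l, c l * w ^ l‖ ^ 2 ≤ (∑' l : ℕ, ‖c l‖ ^ 2 * ((l : ℝ) + 1) ^ β) *
        ∑' l : ℕ, ((l : ℝ) + 1) ^ (-β) * (‖w‖ ^ 2) ^ l := by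
  set ρ : ℕ → ℝ := fun l => √(((l : ℝ) + 1) ^ β)
  have hρ : ∀ l, 0 < ρ l := fun l => Real.sqrt_pos.2 (by positivity)
  have hρsq : ∀ l, ρ l ^ 2 = ((l : ℝ) + 1) ^ β := fun l => Real.sq_sqrt (by positivity)
  have hu : ∀ l, (‖c l‖ * ρ l) ^ 2 = ‖c l‖ ^ 2 * ((l : ℝ) + 1) ^ β := fun l => by
    rw [mul_pow, hρsq]
  have hv : ∀ l, (‖w‖ ^ l / ρ l) ^ 2 = ((l : ℝ) + 1) ^ (-β) * (‖w‖ ^ 2) ^ l := fun l => by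
    rw [div_pow, hρsq, Real.rpow_neg (by positivity), ← pow_mul, ← pow_mul, mul_comm l 2,
      div_eq_inv_mul]
  have huv : ∀ l, ‖c l‖ * ρ l * (‖w‖ ^ l / ρ l) = ‖c l * w ^ l‖ := fun l => by
    rw [norm_mul, norm_pow]
    field_simp [(hρ l).ne']
  have hgeom := summable_add_one_rpow_mul_geometric (-β) (sq_nonneg ‖w‖)
    (pow_lt_one₀ (norm_nonneg w) hw two_ne_zero)
  obtain ⟨hsum, hle⟩ := summable_mul_and_sq_tsum_mul_le (u := fun l => ‖c l‖ * ρ l)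
    (v := fun l => ‖w‖ ^ l / ρ l) (fun l => by positivity)
    (fun l => div_nonneg (by positivity) (hρ l).le)
    (by simpa only [hu] using hc) (by simpa only [hv] using hgeom)
  simp only [hu, hv, huv] at hsum hle
  refine ⟨hsum.of_norm, ?_⟩
  calc ‖∑' l, c l * w ^ l‖ ^ 2 ≤ (∑' l, ‖c l * w ^ l‖) ^ 2 :=
        pow_le_pow_left₀ (norm_nonneg _) (norm_tsum_le_tsum_norm hsum) 2
    _ ≤ _ := hle

lemma MemD1.memD_comp_fst {a1 : ℝ} {g : ℂ → ℂ} (hg : MemD1 a1 g) (a2 : ℝ) :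
    MemD a1 a2 (fun p => g p.1) := by
  obtain ⟨b, hb, hbs⟩ := hg
  have hinj : Function.Injective (fun k : ℕ => (k, 0)) := fun _ _ h => congrArg Prod.fst h
  have hzero : ∀ kl ∉ Set.range (fun k : ℕ => (k, 0)), kl.2 ≠ 0 :=
    fun kl hkl h => hkl ⟨kl.1, Prod.ext rfl h.symm⟩
  refine ⟨fun k l => if l = 0 then b k else 0, fun p hp => ?_, ?_⟩
  · refine (hinj.hasSum_iff fun kl hkl => by simp [hzero kl hkl]).1 ?_
    simpa [Function.comp_def] using hb p.1 hp.1
  · refine (hinj.summable_iff fun kl hkl => by simp [wt, hzero kl hkl]).1 ?_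
    exact hbs.congr fun k => by simp [wt, wt1]

lemma MemD.swap {a1 a2 : ℝ} {f : ℂ × ℂ → ℂ} (hf : MemD a1 a2 f) :
    MemD a2 a1 (fun p => f (p.2, p.1)) := by
  obtain ⟨a, ha, has⟩ := hf
  refine ⟨fun k l => a l k, fun p hp => ?_, ?_⟩
  · rw [← (Equiv.prodComm ℕ ℕ).hasSum_iff]
    simpa [Function.comp_def, mul_right_comm] using ha (p.2, p.1) ⟨hp.2, hp.1⟩
  · rw [← (Equiv.prodComm ℕ ℕ).summable_iff]
    exact has.congr fun kl => by simp [wt, mul_right_comm]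

lemma MemD.memD1_slice {b1 b2 : ℝ} {F : ℂ × ℂ → ℂ} (hF : MemD b1 b2 F) {w : ℂ}
    (hw : w ∈ UnitDisc) : MemD1 b1 (fun z => F (z, w)) := by
  obtain ⟨c, hc, hcs⟩ := hF
  set V := ∑' l : ℕ, ((l : ℝ) + 1) ^ (-b2) * (‖w‖ ^ 2) ^ l
  have hrow : ∀ k, Summable fun l : ℕ => ‖c k l‖ ^ 2 * ((l : ℝ) + 1) ^ b2 := fun k => by
    have hk : ((k : ℝ) + 1) ^ b1 ≠ 0 := by positivity
    simpa [wt, mul_right_comm _ (((k : ℝ) + 1) ^ b1), hk] using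
      (hcs.prod_factor k).div_const (((k : ℝ) + 1) ^ b1)
  have hslice := fun k => summable_and_norm_tsum_mul_pow_sq_le hw (hrow k)
  refine ⟨fun k => ∑' l, c k l * w ^ l, fun z hz => ?_, ?_⟩
  · refine (hc (z, w) ⟨hz, hw⟩).prod_fiberwise fun k => ?_
    simpa [mul_right_comm] using (hslice k).1.hasSum.mul_right (z ^ k)
  · refine (hcs.prod.mul_left V).of_nonneg_of_le (fun k => by unfold wt1; positivity)
      fun k => ?_
    calc wt1 b1 (fun k => ∑' l, c k l * w ^ l) k
        = ‖∑' l, c k l * w ^ l‖ ^ 2 * ((k : ℝ) + 1) ^ b1 := rfl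
      _ ≤ (∑' l : ℕ, ‖c k l‖ ^ 2 * ((l : ℝ) + 1) ^ b2) * V * ((k : ℝ) + 1) ^ b1 := by
          gcongr
          exact (hslice k).2
      _ = V * ∑' l, wt b1 b2 c (k, l) := by
          simp only [wt, mul_right_comm _ (((k : ℝ) + 1) ^ b1)]
          rw [tsum_mul_right]
          ring

/-- slices of multipliers are multipliers of the corresponding
one-variable spaces. -/
theorem stmt19 (a1 a2 b1 b2 : ℝ) (h : ℂ × ℂ → ℂ)
    (hm : MemM a1 a2 b1 b2 h) :
    (∀ w₀ ∈ UnitDisc, MemM1 a1 b1 (fun z => h (z, w₀))) ∧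
    (∀ z₀ ∈ UnitDisc, MemM1 a2 b2 (fun w => h (z₀, w))) := by
  refine ⟨fun w₀ hw₀ g hg => (hm _ (hg.memD_comp_fst a2)).memD1_slice hw₀,
    fun z₀ hz₀ g hg => ?_⟩
  have hf : MemD a1 a2 (fun p => g p.2) := (hg.memD_comp_fst a1).swap
  exact (hm _ hf).swap.memD1_slice hz₀
end
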